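/- Let M > 0 and let q(x) = T_n(x) + Σ_{k=0}^{n−1} c_k T_k(x) with |c_k| ≤ 2M for all k, where T_k are Chebyshev polynomials of the first kind. Write q(x) = Σ_{j=0}^n d_j x^j. Then there exist constants B > 0 and b > 1 depending only on M such that max_{0 ≤ j ≤ n} |d_j| ≥ B (2b)^n / (n+1) for all n. -/

import Mathlib

/-!
Evaluate `q` at `z = (u + u⁻¹) / 2` with `u = E i` and `E = 16 M + 4`, so that `z = t i` with
`t = (E - E⁻¹) / 2 < E / 2`. Since `T_k((u + u⁻¹) / 2) = (u ^ k + u⁻¹ ^ k) / 2`, the leading term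
has modulus at least `(E ^ n - 1) / 2` while the tail `∑ c_k T_k(z)` is a geometric sum of size at
most `(E ^ n - 1) / 8`, so `|q(z)| ≥ E ^ n / 4`. On the other hand
`|q(z)| ≤ (n + 1) max_j |d_j| t ^ n`, which gives the claim with `2 b = E / t`.
-/

open Polynomial

theorem Polynomial.exists_norm_eval_le_mul_norm_coeff {𝕜 : Type*} [NormedField 𝕜]
    {p : 𝕜[X]} {n : ℕ} (hp : p.natDegree ≤ n) {z : 𝕜} (hz : 1 ≤ ‖z‖) :
    ∃ j ≤ n, ‖p.eval z‖ ≤ (n + 1) * ‖p.coeff j‖ * ‖z‖ ^ n := by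
  obtain ⟨j, hj, hmax⟩ := Finset.exists_max_image (Finset.range (n + 1)) (‖p.coeff ·‖)
    ⟨0, Finset.mem_range.mpr n.succ_pos⟩
  refine ⟨j, Nat.lt_succ_iff.mp (Finset.mem_range.mp hj), ?_⟩
  rw [eval_eq_sum_range' (Nat.lt_succ_of_le hp)]
  calc ‖∑ i ∈ Finset.range (n + 1), p.coeff i * z ^ i‖
      ≤ ∑ i ∈ Finset.range (n + 1), ‖p.coeff j‖ * ‖z‖ ^ n := by
        refine norm_sum_le_of_le _ fun i hi => ?_
        rw [norm_mul, norm_pow]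
        exact mul_le_mul (hmax i hi) (pow_le_pow_right₀ hz (Nat.lt_succ_iff.mp
          (Finset.mem_range.mp hi))) (by positivity) (norm_nonneg _)
    _ = (n + 1) * ‖p.coeff j‖ * ‖z‖ ^ n := by
        rw [Finset.sum_const, Finset.card_range, nsmul_eq_mul, mul_assoc]; push_cast; ring

namespace Polynomial.Chebyshev

theorem T_eval_half_add_inv {K : Type*} [Field K] [NeZero (2 : K)] {u : K} (hu : u ≠ 0)
    (n : ℕ) : (T K n).eval ((u + u⁻¹) / 2) = (u ^ n + u⁻¹ ^ n) / 2 := by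
  have h := congr_arg (eval ((u + u⁻¹) / 2)) (C_comp_two_mul_X K n)
  rw [eval_comp, ← dickson_one_one_eq_chebyshev_C, eval_mul, eval_X, eval_ofNat,
    mul_div_cancel₀ _ two_ne_zero, dickson_one_one_eval_add_inv _ _ (mul_inv_cancel₀ hu)] at h
  rw [h, eval_mul, eval_ofNat, mul_div_cancel_left₀ _ two_ne_zero]

theorem norm_T_eval_half_add_inv_le {u : ℂ} (hu : 1 ≤ ‖u‖) (n : ℕ) :
    ‖(T ℂ n).eval ((u + u⁻¹) / 2)‖ ≤ ‖u‖ ^ n := by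
  have hu0 : u ≠ 0 := norm_pos_iff.mp (by linarith)
  have hinv : ‖u⁻¹ ^ n‖ ≤ ‖u‖ ^ n := by
    rw [norm_pow, norm_inv]
    exact pow_le_pow_left₀ (by positivity) ((inv_le_one₀ (by linarith)).mpr hu |>.trans hu) n
  rw [T_eval_half_add_inv hu0, norm_div, Complex.norm_ofNat, div_le_iff₀ two_pos]
  calc ‖u ^ n + u⁻¹ ^ n‖ ≤ ‖u ^ n‖ + ‖u⁻¹ ^ n‖ := norm_add_le _ _
    _ ≤ ‖u‖ ^ n * 2 := by rw [norm_pow]; linarith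

theorem norm_T_eval_half_add_inv_ge {u : ℂ} (hu : 1 ≤ ‖u‖) (n : ℕ) :
    (‖u‖ ^ n - 1) / 2 ≤ ‖(T ℂ n).eval ((u + u⁻¹) / 2)‖ := by
  have hu0 : u ≠ 0 := norm_pos_iff.mp (by linarith)
  have hinv : ‖u⁻¹ ^ n‖ ≤ 1 := by
    rw [norm_pow, norm_inv]
    exact pow_le_one₀ (by positivity) ((inv_le_one₀ (by linarith)).mpr hu)
  rw [T_eval_half_add_inv hu0, norm_div, Complex.norm_ofNat]
  gcongr
  calc ‖u‖ ^ n - 1 ≤ ‖u ^ n‖ - ‖u⁻¹ ^ n‖ := by rw [norm_pow]; linarith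
    _ ≤ ‖u ^ n + u⁻¹ ^ n‖ := norm_sub_le_norm_add _ _

theorem natDegree_T_add_sum_le (n : ℕ) (c : ℕ → ℂ) :
    (T ℂ n + ∑ k ∈ Finset.range n, Polynomial.C (c k) * T ℂ k).natDegree ≤ n := by
  refine natDegree_add_le_of_degree_le (by simp [natDegree_T]) ?_
  refine natDegree_sum_le_of_forall_le _ _ fun k hk => ?_
  exact (natDegree_C_mul_le _ _).trans (by simp [natDegree_T, (Finset.mem_range.mp hk).le])

theorem pow_div_four_le_norm_eval_T_add_sum {C : ℝ} {u : ℂ} (hu : 8 * C + 4 ≤ ‖u‖) {n : ℕ}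
    {c : ℕ → ℂ} (hc : ∀ k < n, ‖c k‖ ≤ C) :
    ‖u‖ ^ n / 4 ≤
      ‖(T ℂ n + ∑ k ∈ Finset.range n, Polynomial.C (c k) * T ℂ k).eval ((u + u⁻¹) / 2)‖ := by
  rcases Nat.eq_zero_or_pos n with rfl | hn
  · norm_num
  set E := ‖u‖
  have hC : 0 ≤ C := (norm_nonneg _).trans (hc 0 hn)
  have hE : 1 ≤ E := by linarith
  have htail : ‖∑ k ∈ Finset.range n, (Polynomial.C (c k) * T ℂ k).eval ((u + u⁻¹) / 2)‖
      ≤ (E ^ n - 1) / 8 := by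
    calc _ ≤ ∑ k ∈ Finset.range n, C * E ^ k := by
          refine norm_sum_le_of_le _ fun k hk => ?_
          rw [eval_mul, eval_C, norm_mul]
          exact mul_le_mul (hc k (Finset.mem_range.mp hk)) (norm_T_eval_half_add_inv_le hE k)
            (norm_nonneg _) hC
      _ ≤ (∑ k ∈ Finset.range n, E ^ k) * (E - 1) / 8 := by
          have hS : 0 ≤ ∑ k ∈ Finset.range n, E ^ k := by positivity
          rw [← Finset.mul_sum]
          nlinarith
      _ = (E ^ n - 1) / 8 := by rw [geom_sum_mul]
  have hlead := norm_T_eval_half_add_inv_ge hE n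
  have hEn : 4 ≤ E ^ n := by linarith [le_self_pow₀ hE hn.ne']
  rw [eval_add, eval_finsetSum]
  linarith [norm_sub_le_norm_add ((T ℂ n).eval ((u + u⁻¹) / 2))
    (∑ k ∈ Finset.range n, (Polynomial.C (c k) * T ℂ k).eval ((u + u⁻¹) / 2))]

theorem exists_pow_div_four_le_norm_coeff_T_add_sum {C : ℝ} {u : ℂ} (hu : 8 * C + 4 ≤ ‖u‖)
    (hz : 1 ≤ ‖(u + u⁻¹) / 2‖) {n : ℕ} {c : ℕ → ℂ} (hc : ∀ k < n, ‖c k‖ ≤ C) :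
    ∃ j ≤ n, ‖u‖ ^ n / 4 ≤ (n + 1) *
      ‖(T ℂ n + ∑ k ∈ Finset.range n, Polynomial.C (c k) * T ℂ k).coeff j‖ *
        ‖(u + u⁻¹) / 2‖ ^ n := by
  obtain ⟨j, hj, hle⟩ := exists_norm_eval_le_mul_norm_coeff (natDegree_T_add_sum_le n c) hz
  exact ⟨j, hj, (pow_div_four_le_norm_eval_T_add_sum hu hc).trans hle⟩

end Polynomial.Chebyshev

theorem no_cancellation_coeff_growth (M : ℝ) (hM : 0 < M) :
    ∃ B > (0 : ℝ), ∃ b > (1 : ℝ), ∀ n : ℕ, ∀ c : ℕ → ℝ,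
      (∀ k < n, |c k| ≤ 2 * M) →
      ∀ q : ℝ[X],
        q = Polynomial.Chebyshev.T ℝ n +
              ∑ k ∈ Finset.range n, Polynomial.C (c k) * Polynomial.Chebyshev.T ℝ k →
        ∃ j ≤ n, B * (2 * b) ^ n / (n + 1) ≤ |q.coeff j| := by
  set E : ℝ := 16 * M + 4
  set t : ℝ := (E - E⁻¹) / 2 with ht_def
  have hEinv : 0 < E⁻¹ ∧ E⁻¹ ≤ 1 := ⟨by positivity, inv_le_one_of_one_le₀ (by linarith)⟩
  have ht : 1 ≤ t := by linarith [ht_def]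
  have hz : ((E * Complex.I : ℂ) + (E * Complex.I)⁻¹) / 2 = (t : ℂ) * Complex.I := by
    rw [mul_inv, Complex.inv_I]
    push_cast [ht_def]
    ring
  have hnormE : ‖(E : ℂ) * Complex.I‖ = E := by simp [abs_of_pos (by linarith : 0 < E)]
  have hnormt : ‖(t : ℂ) * Complex.I‖ = t := by simp [abs_of_pos (by linarith : 0 < t)]
  refine ⟨1 / 4, by norm_num, E / (2 * t),
    (one_lt_div (by positivity)).mpr (by linarith [ht_def]), fun n c hc q hq => ?_⟩
  have hqc : Polynomial.Chebyshev.T ℂ n + ∑ k ∈ Finset.range n,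
      Polynomial.C (c k : ℂ) * Polynomial.Chebyshev.T ℂ k = q.map (algebraMap ℝ ℂ) := by
    simp [hq, Polynomial.map_sum, Chebyshev.map_T]
  obtain ⟨j, hj, hbound⟩ := Chebyshev.exists_pow_div_four_le_norm_coeff_T_add_sum
    (u := E * Complex.I) (C := 2 * M) (by linarith) (hz ▸ hnormt.symm ▸ ht)
    (c := fun k => (c k : ℂ)) (by simpa using hc)
  rw [hqc, hz, hnormE, hnormt, coeff_map, Complex.coe_algebraMap, Complex.norm_real,
    Real.norm_eq_abs] at hbound
  refine ⟨j, hj, ?_⟩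
  have h2b : 2 * (E / (2 * t)) = E / t := by field_simp
  rw [h2b, div_pow, div_le_iff₀ (by positivity), mul_div_assoc', div_le_iff₀ (by positivity)]
  linarith
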